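/- arXiv:2009.08601 — 3 statements merged into one kernel-verified Lean document; each statement's English description precedes it below -/
import Mathlib

section
/- If L is a linear order with no copy of ω₁*, then every scattered suborder of L that is countable is σ-well-ordered; more generally, a linear order with no copy of ω₁* is σ-well-ordered if and only if it is σ-scattered. -/
open Set

/-- `L` is σ-well-ordered: a countable union of well-ordered suborders. -/
def IsSigmaWellOrdered (L : Type*) [LinearOrder L] : Prop :=
  ∃ A : ℕ → Set L, (∀ n, (A n).IsWF) ∧ (⋃ n, A n) = Set.univ

/-- `L` is σ-scattered: a countable union of scattered suborders. -/
def IsSigmaScattered (L : Type*) [LinearOrder L] : Prop :=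
  ∃ A : ℕ → Set L, (∀ n, IsEmpty (ℚ ↪o ↥(A n))) ∧ (⋃ n, A n) = Set.univ

/-- The first uncountable ordinal ω₁. -/
noncomputable def omega1 : Ordinal := (Cardinal.aleph 1).ord

/-- ω₁* (reversed ω₁) does not embed into `L`. -/
def NoOmega1Star (L : Type*) [LinearOrder L] : Prop :=
  ¬ ∃ f : Ordinal.{0} → L, ∀ ⦃a b : Ordinal⦄, a < b → b < omega1 → f b < f a

/-!
Call `a, b ∈ s` equivalent when `s ∩ [a, b]` is covered by countably many well-ordered sets.
Every class is so covered: above a point `x` it is a well-ordered sum of such pieces `[x, w]`,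
indexed by a cofinal well-ordered subset, and below `x` it is a countable union of pieces
`[w, x]`, because in the absence of `ω₁*` a reversely well-ordered set is countable.
Consequently between two inequivalent points lies a point inequivalent to both (otherwise
`s ∩ [a, b]` would meet only two classes), so if there were two classes, a set of
representatives would be a dense suborder of `s`, into which `ℚ` embeds. Hence a scattered `s`
is a single class.
-/

theorem exists_isWF_isCofinal (α : Type*) [LinearOrder α] :
    ∃ s : Set α, s.IsWF ∧ IsCofinal s := by
  -- On the records of a well-ordering, `<` is contained in that well-ordering.
  refine ⟨_, ?_, isCofinal_setOfPred_imp_lt WellOrderingRel⟩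
  refine (IsWellFounded.wf (r := WellOrderingRel (α := α))).wellFoundedOn.mono'
    fun a ha b _ hab => ?_
  rcases trichotomous_of WellOrderingRel a b with h | rfl | h
  · exact h
  · exact (lt_irrefl a hab).elim
  · exact ((ha b h).not_gt hab).elim

namespace Set

variable {α : Type*}

section Preorder

variable [Preorder α] {s t : Set α}

def IsSigmaWF (s : Set α) : Prop :=
  ∃ B : ℕ → Set α, (∀ n, (B n).IsWF) ∧ s ⊆ ⋃ n, B n

theorem IsSigmaWF.mono (ht : t.IsSigmaWF) (hst : s ⊆ t) : s.IsSigmaWF :=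
  let ⟨B, hB, hcover⟩ := ht
  ⟨B, hB, hst.trans hcover⟩

theorem IsWF.isSigmaWF (hs : s.IsWF) : s.IsSigmaWF :=
  ⟨fun _ => s, fun _ => hs, subset_iUnion (fun _ : ℕ => s) 0⟩

theorem IsSigmaWF.union (hs : s.IsSigmaWF) (ht : t.IsSigmaWF) : (s ∪ t).IsSigmaWF := by
  obtain ⟨B, hB, hsB⟩ := hs
  obtain ⟨C, hC, htC⟩ := ht
  exact ⟨fun n => B n ∪ C n, fun n => (hB n).union (hC n),
    union_subset (hsB.trans (iUnion_mono fun _ => subset_union_left))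
      (htC.trans (iUnion_mono fun _ => subset_union_right))⟩

theorem isSigmaWF_iUnion {ι : Type*} [Countable ι] {t : ι → Set α}
    (ht : ∀ i, (t i).IsSigmaWF) : (⋃ i, t i).IsSigmaWF := by
  obtain ⟨g, hg⟩ := exists_surjective_nat (Option ι)
  choose B hB hcover using ht
  refine ⟨fun k => (g k.unpair.1).elim ∅ fun i => B i k.unpair.2, fun k => ?_,
    iUnion_subset fun i x hx => ?_⟩
  · cases h : g k.unpair.1 <;> simp [h, hB, isWF_empty]
  · obtain ⟨n, hn⟩ := hg (some i)
    obtain ⟨m, hm⟩ := mem_iUnion.1 (hcover i hx)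
    exact mem_iUnion.2 ⟨Nat.pair n m, by simpa [hn] using hm⟩

theorem IsWF.isEmpty_orderEmbedding {β : Type*} [Preorder β] [Nonempty β] [NoMinOrder β]
    (hs : s.IsWF) : IsEmpty (β ↪o s) := by
  refine ⟨fun f => ?_⟩
  have : WellFoundedLT s := (isWellFounded_iff _ _).2 hs
  have := f.wellFoundedLT
  obtain ⟨b, -, hb⟩ := (wellFounded_lt (α := β)).has_min univ univ_nonempty
  obtain ⟨c, hc⟩ := exists_lt b
  exact hb c trivial hc

theorem IsWF.biUnion_of_lt {ι : Type*} [LinearOrder ι] {W : Set ι} (hW : W.IsWF)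
    {S : ι → Set α} (hS : ∀ i ∈ W, (S i).IsWF)
    (hlt : ∀ i ∈ W, ∀ j ∈ W, i < j → ∀ x ∈ S i, ∀ y ∈ S j, x < y) :
    (⋃ i ∈ W, S i).IsWF := by
  rw [isWF_iff_no_descending_seq]
  intro f hf hmem
  simp only [mem_iUnion₂] at hmem
  choose i hiW hfi using hmem
  have hanti : Antitone fun k => (⟨i k, hiW k⟩ : W) := fun k l hkl =>
    not_lt.1 fun h => (hlt _ (hiW k) _ (hiW l) h _ (hfi k) _ (hfi l)).not_ge (hf.antitone hkl)
  have : WellFoundedLT W := (isWellFounded_iff _ _).2 hW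
  obtain ⟨K, hK⟩ := WellFoundedLT.antitone_chain_condition hanti
  refine isWF_iff_no_descending_seq.1 (hS _ (hiW K)) (fun m => f (K + m))
    (hf.comp_strictMono fun _ _ h => by omega) fun m => ?_
  have hiK : i K = i (K + m) := congrArg Subtype.val (hK (K + m) (by omega))
  exact hiK ▸ hfi (K + m)

end Preorder

section LinearOrder

variable [LinearOrder α]

theorem exists_isWF_subset_forall_le (U : Set α) :
    ∃ W ⊆ U, W.IsWF ∧ ∀ u ∈ U, ∃ w ∈ W, u ≤ w := by
  obtain ⟨W, hW, hcof⟩ := exists_isWF_isCofinal U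
  refine ⟨Subtype.val '' W, image_subset_iff.2 fun x _ => x.2, wellFoundedOn_image.2 hW,
    fun u hu => ?_⟩
  obtain ⟨w, hw, huw⟩ := hcof ⟨u, hu⟩
  exact ⟨w, mem_image_of_mem _ hw, huw⟩

end LinearOrder

end Set

theorem isSigmaWellOrdered_iff_isSigmaWF_univ {α : Type*} [LinearOrder α] :
    IsSigmaWellOrdered α ↔ (univ : Set α).IsSigmaWF := by
  simp only [IsSigmaWellOrdered, IsSigmaWF, univ_subset_iff]

theorem isSigmaWellOrdered_of_countable {α : Type*} [LinearOrder α] [Countable α] :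
    IsSigmaWellOrdered α := by
  obtain ⟨e, he⟩ := exists_injective_nat α
  exact ⟨fun n => e ⁻¹' {n}, fun n => (subsingleton_singleton.preimage he).isWF,
    eq_univ_of_forall fun x => mem_iUnion.2 ⟨e x, rfl⟩⟩

open scoped Ordinal in
theorem exists_strictMonoOn_Iio_omega1 {α : Type*} [LinearOrder α] [WellFoundedLT α]
    (h : ¬ Countable α) : ∃ f : Ordinal.{0} → α, StrictMonoOn f (Iio omega1) := by
  have hα : Cardinal.aleph 1 ≤ Cardinal.mk α := by
    rw [← Cardinal.succ_aleph0, Order.succ_le_iff, ← not_le, Cardinal.mk_le_aleph0_iff]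
    exact h
  have hle : Ordinal.lift (typeLT omega1.{0}.ToType) ≤ Ordinal.lift.{0} (typeLT α) := by
    rw [Ordinal.type_toType, omega1, Cardinal.lift_ord, Cardinal.lift_aleph,
      Ordinal.lift_one, Ordinal.lift_uzero, Cardinal.ord_le, Ordinal.card_type]
    exact hα
  obtain ⟨g⟩ := Ordinal.lift_type_le.1 hle
  have : Nonempty α := not_isEmpty_iff.1 fun _ => h inferInstance
  refine ⟨fun a => if ha : a < omega1 then g.toOrderEmbedding (Ordinal.ToType.mk ⟨a, ha⟩)
    else Classical.arbitrary α, fun a ha b hb hab => ?_⟩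
  simp only [dif_pos (show a < omega1 from ha), dif_pos (show b < omega1 from hb)]
  exact (g.toOrderEmbedding.strictMono.comp Ordinal.ToType.mk.strictMono) hab

section NoOmega1Star

variable {L : Type*} [LinearOrder L]

theorem NoOmega1Star.countable_of_isWF_dual (hno : NoOmega1Star L) {W : Set Lᵒᵈ}
    (hW : W.IsWF) : W.Countable := by
  by_contra hc
  have : WellFoundedLT W := (isWellFounded_iff _ _).2 hW
  obtain ⟨f, hf⟩ := exists_strictMonoOn_Iio_omega1 hc
  exact hno ⟨fun a => OrderDual.ofDual (f a : Lᵒᵈ), fun a b hab hb => hf (hab.trans hb) hb hab⟩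

theorem isSigmaWF_of_forall_inter_Iic {U : Set L} (h : ∀ u ∈ U, (U ∩ Iic u).IsSigmaWF) :
    U.IsSigmaWF := by
  obtain ⟨W, hWU, hW, hcof⟩ := exists_isWF_subset_forall_le U
  choose! B hB hcover using fun w (hw : w ∈ W) => h w (hWU hw)
  -- `U` is the ordered sum of the blocks `J w`, `w ∈ W`, and `J w ⊆ U ∩ Iic w`.
  let J (w : L) : Set L := {u ∈ U | u ≤ w ∧ ∀ w' ∈ W, w' < w → w' < u}
  refine ⟨fun n => ⋃ w ∈ W, J w ∩ B w n,
    fun n => hW.biUnion_of_lt (fun w hw => (hB w hw n).mono inter_subset_right) ?_, ?_⟩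
  · rintro w hw w' - hlt x ⟨hx, -⟩ y ⟨hy, -⟩
    exact hx.2.1.trans_lt (hy.2.2 w hw hlt)
  · intro u hu
    have hne : (W ∩ Ici u).Nonempty := let ⟨w, hw, huw⟩ := hcof u hu; ⟨w, hw, huw⟩
    have hWu : (W ∩ Ici u).IsWF := hW.mono inter_subset_left
    obtain ⟨hwW, huw⟩ := hWu.min_mem hne
    obtain ⟨n, hn⟩ := mem_iUnion.1 (hcover _ hwW ⟨hu, huw⟩)
    refine mem_iUnion.2 ⟨n, mem_biUnion hwW ⟨⟨hu, huw, fun w' hw' hlt => ?_⟩, hn⟩⟩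
    exact not_le.1 fun h => (hWu.min_le hne ⟨hw', h⟩).not_gt hlt

theorem NoOmega1Star.isSigmaWF_of_forall_inter_Ici (hno : NoOmega1Star L) {D : Set L}
    (h : ∀ u ∈ D, (D ∩ Ici u).IsSigmaWF) : D.IsSigmaWF := by
  obtain ⟨W, hWD, hW, hcoi⟩ := exists_isWF_subset_forall_le (OrderDual.ofDual ⁻¹' D)
  have : Countable W := hno.countable_of_isWF_dual hW
  refine (isSigmaWF_iUnion fun w : W => h (OrderDual.ofDual w) (hWD w.2)).mono fun u hu => ?_
  obtain ⟨w, hwW, hwu⟩ := hcoi u hu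
  exact mem_iUnion.2 ⟨⟨w, hwW⟩, hu, hwu⟩

theorem NoOmega1Star.isSigmaWF_of_forall_inter_uIcc (hno : NoOmega1Star L) (x : L)
    {C : Set L} (h : ∀ u ∈ C, (C ∩ uIcc x u).IsSigmaWF) : C.IsSigmaWF := by
  have hup : (C ∩ Ici x).IsSigmaWF := isSigmaWF_of_forall_inter_Iic fun u hu =>
    (h u hu.1).mono fun z ⟨⟨hzC, hxz⟩, hzu⟩ => ⟨hzC, Icc_subset_uIcc ⟨hxz, hzu⟩⟩
  have hdown : (C ∩ Iic x).IsSigmaWF := hno.isSigmaWF_of_forall_inter_Ici fun u hu =>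
    (h u hu.1).mono fun z ⟨⟨hzC, hzx⟩, huz⟩ => ⟨hzC, Icc_subset_uIcc' ⟨huz, hzx⟩⟩
  exact (hup.union hdown).mono fun z hz => (le_total x z).imp (⟨hz, ·⟩) (⟨hz, ·⟩)

theorem nonempty_orderEmbedding_rat_of_equivalence {α : Type*} [LinearOrder α]
    {r : α → α → Prop} (hr : Equivalence r)
    (hconv : ∀ ⦃a b c⦄, a ≤ b → b ≤ c → r a c → r a b)
    (hsplit : ∀ ⦃a b⦄, a < b → ¬ r a b → ∃ c, a < c ∧ c < b ∧ ¬ r a c ∧ ¬ r c b)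
    (hne : ∃ a b, ¬ r a b) : Nonempty (ℚ ↪o α) := by
  -- The classes are convex, so one representative per class forms a dense suborder.
  let S : Setoid α := ⟨r, hr⟩
  let rep (a : α) : α := (Quotient.mk S a).out
  have rep_rel (a : α) : r (rep a) a := Quotient.mk_out a
  have rep_eq_iff (a b : α) : rep a = rep b ↔ r a b := Quotient.out_inj.trans Quotient.eq
  have lt_rep {a b : α} (hab : a < b) (h : ¬ r a b) : a < rep b := not_le.1 fun hle =>
    h (hr.trans (hr.symm (hconv hle hab.le (rep_rel b))) (rep_rel b))
  have rep_lt {a b : α} (hab : a < b) (h : ¬ r a b) : rep a < b := not_le.1 fun hle =>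
    h (hconv hab.le hle (hr.symm (rep_rel a)))
  have : DenselyOrdered (range rep) := ⟨by
    rintro ⟨_, a, rfl⟩ ⟨_, b, rfl⟩ hlt
    have hab : ¬ r (rep a) (rep b) := fun h => hlt.ne <| Subtype.ext <|
      (rep_eq_iff a b).2 (hr.trans (hr.symm (rep_rel a)) (hr.trans h (rep_rel b)))
    obtain ⟨c, hac, hcb, h₁, h₂⟩ := hsplit hlt hab
    exact ⟨⟨rep c, c, rfl⟩, lt_rep hac h₁, rep_lt hcb h₂⟩⟩
  have : Nontrivial (range rep) := by
    obtain ⟨a, b, hab⟩ := hne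
    exact ⟨⟨⟨rep a, a, rfl⟩, ⟨rep b, b, rfl⟩,
      fun h => hab ((rep_eq_iff a b).1 (congrArg Subtype.val h))⟩⟩
  obtain ⟨e⟩ := Order.embedding_from_countable_to_dense ℚ (range rep)
  exact ⟨e.trans (OrderEmbedding.subtype _)⟩

theorem equivalence_isSigmaWF_inter_uIcc (s : Set L) :
    Equivalence fun a b : L => (s ∩ uIcc a b).IsSigmaWF where
  refl a := ((subsingleton_singleton (a := a)).anti (by simp)).isWF.isSigmaWF
  symm h := by rwa [uIcc_comm]
  trans hab hbc := (hab.union hbc).mono <|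
    (inter_subset_inter_right s uIcc_subset_uIcc_union_uIcc).trans
      (inter_union_distrib_left _ _ _).subset

theorem NoOmega1Star.isSigmaWF_setOf_isSigmaWF_inter_uIcc (hno : NoOmega1Star L)
    (s : Set L) (x : L) : {z ∈ s | (s ∩ uIcc x z).IsSigmaWF}.IsSigmaWF :=
  hno.isSigmaWF_of_forall_inter_uIcc x fun _ hu =>
    hu.2.mono (inter_subset_inter_left _ fun _ hz => hz.1)

theorem NoOmega1Star.exists_between_not_isSigmaWF_inter_uIcc (hno : NoOmega1Star L)
    {s : Set L} {a b : L} (hab : a < b) (h : ¬ (s ∩ uIcc a b).IsSigmaWF) :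
    ∃ c ∈ s, a < c ∧ c < b ∧ ¬ (s ∩ uIcc a c).IsSigmaWF ∧ ¬ (s ∩ uIcc c b).IsSigmaWF := by
  have hr := equivalence_isSigmaWF_inter_uIcc s
  by_contra! hcon
  refine h (((hno.isSigmaWF_setOf_isSigmaWF_inter_uIcc s a).union
    (hno.isSigmaWF_setOf_isSigmaWF_inter_uIcc s b)).mono ?_)
  rintro z ⟨hzs, hz⟩
  rw [uIcc_of_le hab.le] at hz
  by_cases haz : (s ∩ uIcc a z).IsSigmaWF
  · exact Or.inl ⟨hzs, haz⟩
  · refine Or.inr ⟨hzs, hr.symm ?_⟩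
    rcases hz.2.eq_or_lt with rfl | hzb
    · exact hr.refl z
    · exact hcon z hzs (hz.1.lt_of_ne (by rintro rfl; exact haz (hr.refl a))) hzb haz

theorem NoOmega1Star.isSigmaWF_of_isEmpty_orderEmbedding (hno : NoOmega1Star L) {s : Set L}
    (hs : IsEmpty (ℚ ↪o s)) : s.IsSigmaWF := by
  by_cases hall : ∀ a b : s, (s ∩ uIcc (a : L) b).IsSigmaWF
  · rcases s.eq_empty_or_nonempty with rfl | ⟨x, hx⟩
    · exact isWF_empty.isSigmaWF
    · exact (hno.isSigmaWF_setOf_isSigmaWF_inter_uIcc s x).mono fun z hz =>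
        ⟨hz, hall ⟨x, hx⟩ ⟨z, hz⟩⟩
  · push Not at hall
    refine hs.elim (nonempty_orderEmbedding_rat_of_equivalence
      ((equivalence_isSigmaWF_inter_uIcc s).comap Subtype.val) ?_ ?_ hall).some
    · exact fun a b c hab hbc h => h.mono <| inter_subset_inter_right s <|
        uIcc_subset_uIcc left_mem_uIcc (mem_uIcc_of_le hab hbc)
    · intro a b hab h
      obtain ⟨c, hcs, hac, hcb, h₁, h₂⟩ := hno.exists_between_not_isSigmaWF_inter_uIcc hab h
      exact ⟨⟨c, hcs⟩, hac, hcb, h₁, h₂⟩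

end NoOmega1Star

/-- Lemma 2.8: if `L` has no copy of ω₁*, then every countable scattered suborder
of `L` is σ-well-ordered, and more generally `L` is σ-well-ordered iff it is
σ-scattered. -/
theorem sigmaWellOrdered_iff_sigmaScattered_of_noOmega1Star
    (L : Type*) [LinearOrder L] (hno : NoOmega1Star L) :
    (∀ s : Set L, s.Countable → IsEmpty (ℚ ↪o ↥s) → IsSigmaWellOrdered ↥s) ∧
    (IsSigmaWellOrdered L ↔ IsSigmaScattered L) := by
  refine ⟨fun s hs _ => have := hs.to_subtype; isSigmaWellOrdered_of_countable, ?_, ?_⟩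
  · rintro ⟨A, hA, hcover⟩
    exact ⟨A, fun n => (hA n).isEmpty_orderEmbedding, hcover⟩
  · rintro ⟨A, hA, hcover⟩
    rw [isSigmaWellOrdered_iff_isSigmaWF_univ, ← hcover]
    exact isSigmaWF_iUnion fun n => hno.isSigmaWF_of_isEmpty_orderEmbedding (hA n)
end

section
/- Suppose L is a linear order, M is a σ-well-ordered linear order, and n is fixed, and there is an order-preserving injection from L into the set of finite sequences over M of length at most n, where sequences are compared by: σ < τ iff τ is a proper initial segment of σ, or σ is lexicographically smaller than τ. Then L is σ-well-ordered. -/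
open Set

/-- The order on finite sequences over `M`: `σ < τ` iff `τ` is a proper initial
segment of `σ`, or at the least position where they differ `σ` has the smaller
entry. -/
def SeqLT {M : Type*} [LinearOrder M] (σ τ : List M) : Prop :=
  (τ <+: σ ∧ σ ≠ τ) ∨
    ∃ (c : List M) (a b : M) (s t : List M), a < b ∧ σ = c ++ a :: s ∧ τ = c ++ b :: t

/-- With equal lengths, `SeqLT` is just the lexicographic comparison. -/
lemma SeqLT.lex_of_length_eq {M : Type*} [LinearOrder M] {σ τ : List M}
    (h : SeqLT σ τ) (hl : σ.length = τ.length) :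
    ∃ (co : List M) (a b : M) (s t : List M),
      a < b ∧ σ = co ++ a :: s ∧ τ = co ++ b :: t := by
  rcases h with ⟨hpre, hne⟩ | h
  · exact absurd (hpre.eq_of_length hl.symm).symm hne
  · exact h

/-- If `L` order-embeds into the finite sequences of length at most `n` over a
σ-well-ordered linear order `M`, ordered by `SeqLT`, then `L` is σ-well-ordered. -/
theorem sigmaWellOrdered_of_embedding_into_bounded_sequences
    (L M : Type*) [LinearOrder L] [LinearOrder M]
    (hM : IsSigmaWellOrdered M) (n : ℕ) (f : L → List M)
    (hinj : Function.Injective f)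
    (hlen : ∀ x, (f x).length ≤ n)
    (hmono : ∀ x y : L, x < y → SeqLT (f x) (f y)) :
    IsSigmaWellOrdered L := by
  classical
  obtain ⟨B, hB, hBcov⟩ := hM
  have hex : ∀ m : M, ∃ k, m ∈ B k := by
    intro m
    have : m ∈ ⋃ k, B k := by rw [hBcov]; trivial
    simpa using this
  choose p hp using hex
  refine ⟨fun k => {x | (f x).map p = Denumerable.ofNat (List ℕ) k}, ?_, ?_⟩
  · intro k
    set co : List ℕ := Denumerable.ofNat (List ℕ) k with hc
    rw [Set.isWF_iff_no_descending_seq]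
    intro g hg hmem
    have hmap : ∀ i : ℕ, (f (g i)).map p = co := fun i => hmem i
    have hlen' : ∀ i : ℕ, (f (g i)).length = co.length := by
      intro i
      have := congrArg List.length (hmap i)
      simpa using this
    set T : Fin co.length → Type _ := fun j => {m : M // m ∈ B (co[j.1]'(j.2))} with hT
    have hmemB : ∀ (i : ℕ) (j : Fin co.length),
        (f (g i))[j.1]'(by rw [hlen' i]; exact j.2) ∈ B (co[j.1]'(j.2)) := by
      intro i j
      have h1 : co[j.1]'(j.2) = p ((f (g i))[j.1]'(by rw [hlen' i]; exact j.2)) := by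
        rw [List.getElem_of_eq (hmap i).symm, List.getElem_map]
      rw [h1]
      exact hp _
    set F : ℕ → ∀ j : Fin co.length, T j :=
      fun i j => ⟨(f (g i))[j.1]'(by rw [hlen' i]; exact j.2), hmemB i j⟩ with hF
    set r : Fin co.length → Fin co.length → Prop := (· < ·) with hr
    have hdesc : ∀ i : ℕ,
        Pi.Lex r (fun {j} (x y : T j) => (x : M) < (y : M)) (F (i + 1)) (F i) := by
      intro i
      have hlt : g (i + 1) < g i := hg (Nat.lt_succ_self i)
      obtain ⟨d, a, b, s, t, hab, hσ, hτ⟩ :=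
        (hmono _ _ hlt).lex_of_length_eq ((hlen' (i + 1)).trans (hlen' i).symm)
      have hd : d.length < co.length := by
        rw [← hlen' (i + 1), hσ]
        simp
      refine ⟨⟨d.length, hd⟩, ?_, ?_⟩
      · intro j hj
        have hj' : j.1 < d.length := hj
        apply Subtype.ext
        show (f (g (i + 1)))[j.1]'_ = (f (g i))[j.1]'_
        rw [List.getElem_of_eq hσ, List.getElem_of_eq hτ,
          List.getElem_append_left, List.getElem_append_left] <;> exact hj'
      · show (f (g (i + 1)))[d.length]'_ < (f (g i))[d.length]'_
        rw [List.getElem_of_eq hσ, List.getElem_of_eq hτ,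
          List.getElem_append_right (Nat.le_refl _), List.getElem_append_right (Nat.le_refl _)]
        simpa using hab
    have hwf : WellFounded (Pi.Lex r (fun {j} (x y : T j) => (x : M) < (y : M))) :=
      Pi.Lex.wellFounded r fun j => hB (co[j.1]'(j.2))
    obtain ⟨m, hm, hmin⟩ := hwf.has_min (Set.range F) ⟨F 0, 0, rfl⟩
    obtain ⟨i, rfl⟩ := hm
    exact hmin (F (i + 1)) ⟨i + 1, rfl⟩ (hdesc i)
  · ext x
    simp only [Set.mem_iUnion, Set.mem_univ, iff_true, Set.mem_setOf_eq]
    exact ⟨Encodable.encode ((f x).map p), by rw [Denumerable.ofNat_encode]⟩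
end

section
/- Let κ be an infinite cardinal and suppose for each x in a linear order L we have a decreasing function g_x : κ → M into a linear order M with finite range, such that x ↦ g_x is order-preserving for the lexicographic order on functions κ → M. If for every n ∈ ω the set of possible 'trace sequences' σ(x) (the finite alternating sequence of distinct values of g_x and the ordinals where each value first appears) of length ≤ 2n+1 forms a σ-well-ordered order under the order 'σ < τ iff τ is a proper initial segment of σ or σ <_lex τ', then L is σ-well-ordered. -/
open Set

/-- A set `s` is σ-well-ordered with respect to a relation `r`: it is a countable
union of subsets on each of which `r` is well-founded (hence, for a total `r`,
well-ordered). -/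
def SigmaWellOrderedRel {β : Type*} (r : β → β → Prop) (s : Set β) : Prop :=
  ∃ A : ℕ → Set β, (∀ n, A n ⊆ s ∧ (A n).WellFoundedOn r) ∧ (⋃ n, A n) = s

/-- The order on finite sequences: `σ < τ` iff `τ` is a proper initial segment of
`σ`, or `σ` is lexicographically smaller than `τ`. -/
def SeqLT' {β : Type*} (r : β → β → Prop) (σ τ : List β) : Prop :=
  (τ <+: σ ∧ σ ≠ τ) ∨
    ∃ (c : List β) (a b : β) (s t : List β), r a b ∧ σ = c ++ a :: s ∧ τ = c ++ b :: t

/-- The lexicographic order on functions `ι → M`. -/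
def FunLexLT {ι M : Type*} [LinearOrder ι] [LinearOrder M] (f g : ι → M) : Prop :=
  ∃ i : ι, (∀ j, j < i → f j = g j) ∧ f i < g i

/-!
For `x < y` let `i` be the least index with `g x i ≠ g y i`, so `g x i < g y i`. Whether an
index `j < i` is the first occurrence of a value only depends on the values up to `j`, so the
traces of `x` and `y` agree on their parts coded by indices below `i`. After that common part
the trace of `x` continues with `i` and the new value `g x i`, while that of `y` stops, or
continues with an index `> i`, or with `i` and the larger value `g y i`. In each case
`σ x < σ y`. So `σ` strictly increases from `L` into the countable union of the σ-well-ordered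
sets of truncated traces, which is σ-well-ordered, and the decomposition pulls back to `L`.
-/

section SeqLT'

variable {β : Type*} {r : β → β → Prop}

theorem SeqLT'.append_left {s t : List β} (h : SeqLT' r s t) (u : List β) :
    SeqLT' r (u ++ s) (u ++ t) := by
  rcases h with ⟨hpre, hne⟩ | ⟨c, a, b, s', t', hab, rfl, rfl⟩
  · exact Or.inl ⟨(List.prefix_append_right_inj u).2 hpre, fun h => hne (List.append_cancel_left h)⟩
  · exact Or.inr ⟨u ++ c, a, b, s', t', hab, by simp, by simp⟩

theorem SeqLT'.of_cons {a : β} {s t : List β} (h : SeqLT' r (a :: s) (a :: t)) (ha : ¬ r a a) :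
    SeqLT' r s t := by
  rcases h with ⟨hpre, hne⟩ | ⟨_ | ⟨d, c⟩, b₁, b₂, s', t', hb, hs, ht⟩
  · exact Or.inl ⟨List.cons_prefix_cons.1 hpre |>.2, fun h => hne (h ▸ rfl)⟩
  · obtain ⟨rfl, -⟩ := List.cons.inj hs
    obtain ⟨rfl, -⟩ := List.cons.inj ht
    exact absurd hb ha
  · exact Or.inr ⟨c, b₁, b₂, s', t', hb, (List.cons.inj hs).2, (List.cons.inj ht).2⟩

end SeqLT'

theorem SigmaWellOrderedRel.iUnion {β : Type*} {r : β → β → Prop} {S : ℕ → Set β}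
    (h : ∀ n, SigmaWellOrderedRel r (S n)) : SigmaWellOrderedRel r (⋃ n, S n) := by
  choose A hA hAS using h
  refine ⟨fun p => A p.unpair.1 p.unpair.2,
    fun p => ⟨(hA _ _).1.trans (subset_iUnion S _), (hA _ _).2⟩, ?_⟩
  rw [iUnion_unpair fun m k => A m k]
  simp_rw [hAS]

theorem isSigmaWellOrdered_of_map {L β : Type*} [LinearOrder L] {r : β → β → Prop} {s : Set β}
    (hs : SigmaWellOrderedRel r s) (F : L → β) (hF : ∀ x y, x < y → r (F x) (F y))
    (hFs : ∀ x, F x ∈ s) : IsSigmaWellOrdered L := by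
  obtain ⟨A, hA, hAs⟩ := hs
  refine ⟨fun n => F ⁻¹' A n, fun n => ?_, ?_⟩
  · have : (F '' (F ⁻¹' A n)).WellFoundedOn r := (hA n).2.subset (image_preimage_subset F _)
    exact (wellFoundedOn_image.1 this).mono' fun x _ y _ hxy => hF x y hxy
  · rw [← preimage_iUnion, hAs]
    exact eq_univ_of_forall hFs

theorem List.filter_lt_append_filter_le {α : Type*} [LinearOrder α] {l : List α}
    (hl : l.Pairwise (· < ·)) (i : α) :
    l.filter (· < i) ++ l.filter (i ≤ ·) = l := by
  induction l with
  | nil => rfl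
  | cons a t ih =>
    rw [List.pairwise_cons] at hl
    by_cases hai : a < i
    · simp [hai, hai.not_ge, ih hl.2]
    · have ht : ∀ j ∈ a :: t, i ≤ j := by
        simpa [not_lt.1 hai] using fun j hj => (not_lt.1 hai).trans (hl.1 j hj).le
      rw [List.filter_eq_nil_iff.2 fun j hj => by simpa using ht j hj,
        List.filter_eq_self.2 fun j hj => by simpa using ht j hj, List.nil_append]

theorem List.eq_cons_of_mem_of_forall_le {α : Type*} [LinearOrder α] {l : List α} {i : α}
    (hl : l.Pairwise (· < ·)) (hi : i ∈ l) (hle : ∀ j ∈ l, i ≤ j) : ∃ l', l = i :: l' := by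
  obtain ⟨a, t, rfl⟩ := List.exists_cons_of_ne_nil (List.ne_nil_of_mem hi)
  refine ⟨t, ?_⟩
  rcases List.mem_cons.1 hi with rfl | hit
  · rfl
  · exact absurd (hle a List.mem_cons_self) (List.rel_of_pairwise_cons hl hit).not_ge

section FirstOccurrences

variable {ι M : Type*}

def IsFirstOccurrence [LT ι] (f : ι → M) (j : ι) : Prop :=
  ∀ k < j, f k ≠ f j

theorem IsFirstOccurrence.eq_of_apply_eq [LinearOrder ι] {f : ι → M} {j j' : ι}
    (hj : IsFirstOccurrence f j) (hj' : IsFirstOccurrence f j') (h : f j = f j') : j = j' := by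
  rcases lt_trichotomy j j' with hlt | heq | hgt
  · exact absurd h (hj' j hlt)
  · exact heq
  · exact absurd h.symm (hj j' hgt)

theorem isFirstOccurrence_congr [Preorder ι] {f g : ι → M} {j : ι} (hfg : ∀ k ≤ j, f k = g k) :
    IsFirstOccurrence f j ↔ IsFirstOccurrence g j := by
  simp only [IsFirstOccurrence]
  exact forall₂_congr fun k hk => by rw [hfg k hk.le, hfg j le_rfl]

structure IsFirstOccurrenceList [LinearOrder ι] (f : ι → M) (l : List ι) : Prop where
  pairwise : l.Pairwise (· < ·)
  isFirstOccurrence : ∀ j ∈ l, IsFirstOccurrence f j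
  exists_le : ∀ a, ∃ j ∈ l, j ≤ a ∧ f j = f a

namespace IsFirstOccurrenceList

variable [LinearOrder ι] {f : ι → M} {l : List ι}

theorem mem_iff (hl : IsFirstOccurrenceList f l) {j : ι} : j ∈ l ↔ IsFirstOccurrence f j := by
  refine ⟨hl.isFirstOccurrence j, fun hj => ?_⟩
  obtain ⟨k, hk, -, hfk⟩ := hl.exists_le j
  rwa [← (hl.isFirstOccurrence k hk).eq_of_apply_eq hj hfk]

theorem exists_eq_cons_isBot (hl : IsFirstOccurrenceList f l) (a : ι) :
    ∃ j₀ l', l = j₀ :: l' ∧ IsBot j₀ := by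
  obtain ⟨j, hj, -⟩ := hl.exists_le a
  obtain ⟨j₀, l', rfl⟩ := List.exists_cons_of_ne_nil (List.ne_nil_of_mem hj)
  refine ⟨j₀, l', rfl, fun b => ?_⟩
  obtain ⟨k, hk, hkb, -⟩ := hl.exists_le b
  rcases List.mem_cons.1 hk with rfl | hk
  · exact hkb
  · exact (List.rel_of_pairwise_cons hl.pairwise hk).le.trans hkb

theorem ofFn [Preorder M] (hf : Antitone f) {n : ℕ} {z : Fin n → M} {ξ : Fin n → ι}
    (hz : StrictAnti z) (hrange : range f = range z)
    (hξ : ∀ k, f (ξ k) = z k ∧ ∀ j < ξ k, f j ≠ z k) :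
    IsFirstOccurrenceList f (List.ofFn ξ) where
  pairwise := List.pairwise_ofFn.2 fun a b hab =>
    lt_of_not_ge fun hba => (hz hab).not_ge (by simpa only [(hξ _).1] using hf hba)
  isFirstOccurrence := by
    intro _ hj
    obtain ⟨k, rfl⟩ := List.mem_ofFn.1 hj
    intro j hj
    rw [(hξ k).1]
    exact (hξ k).2 j hj
  exists_le a := by
    obtain ⟨k, hk⟩ : f a ∈ range z := hrange ▸ mem_range_self a
    exact ⟨ξ k, List.mem_ofFn.2 (mem_range_self k),
      le_of_not_gt fun ha => (hξ k).2 a ha hk.symm, by rw [(hξ k).1, hk]⟩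

end IsFirstOccurrenceList

/-- For a first-occurrence list `l` of `f`, the trace `σ` of the theorem is the tail of
`traceCode f l`: its first entry is the least index of `ι`, which the trace omits. -/
def traceCode (f : ι → M) (l : List ι) : List (M ⊕ ι) :=
  l.flatMap fun j => [Sum.inr j, Sum.inl (f j)]

theorem traceCode_append (f : ι → M) (l₁ l₂ : List ι) :
    traceCode f (l₁ ++ l₂) = traceCode f l₁ ++ traceCode f l₂ :=
  List.flatMap_append

theorem tail_traceCode_ofFn {f : ι → M} {n : ℕ} {z : Fin (n + 1) → M} {ξ : Fin (n + 1) → ι}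
    (hξ : ∀ k, f (ξ k) = z k) :
    (traceCode f (List.ofFn ξ)).tail = Sum.inl (z 0) ::
      (List.finRange n).flatMap (fun i => [Sum.inr (ξ i.succ), Sum.inl (z i.succ)]) := by
  simp [traceCode, List.ofFn_succ, List.ofFn_eq_map, List.flatMap_map, hξ]

section Comparison

variable [LinearOrder ι] [Preorder M] {f g : ι → M} {lf lg : List ι} {i : ι}

theorem seqLT'_traceCode_cons {d : List ι} (hd : ∀ b ∈ d, i ≤ b) (hlt : f i < g i)
    (l : List ι) : SeqLT' (Sum.Lex (· < ·) (· < ·)) (traceCode f (i :: l)) (traceCode g d) := by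
  rcases d with _ | ⟨b, d⟩
  · exact Or.inl ⟨List.nil_prefix, by simp [traceCode]⟩
  · rcases (hd b List.mem_cons_self).lt_or_eq with hib | rfl
    · exact Or.inr ⟨[], _, _, _, _, Sum.Lex.inr hib, rfl, rfl⟩
    · exact Or.inr ⟨[Sum.inr i], _, _, _, _, Sum.Lex.inl hlt, rfl, rfl⟩

theorem seqLT'_traceCode (hg : Antitone g) (heq : ∀ j < i, f j = g j) (hlt : f i < g i)
    (hlf : IsFirstOccurrenceList f lf) (hlg : IsFirstOccurrenceList g lg) :
    SeqLT' (Sum.Lex (· < ·) (· < ·)) (traceCode f lf) (traceCode g lg) := by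
  have hmem : ∀ j < i, j ∈ lg ↔ j ∈ lf := fun j hj => by
    rw [hlf.mem_iff, hlg.mem_iff]
    exact isFirstOccurrence_congr fun k hk => (heq k (hk.trans_lt hj)).symm
  have hc : lg.filter (· < i) = lf.filter (· < i) :=
    (hlg.pairwise.filter _).eq_of_mem_iff (hlf.pairwise.filter _) fun j => by
      simp only [List.mem_filter, decide_eq_true_eq]
      exact and_congr_left (hmem j)
  -- `i` is a first occurrence for `f` because `f i < g i ≤ g j = f j` for `j < i`.
  have hi : IsFirstOccurrence f i := fun k hk => (hlt.trans_le (heq k hk ▸ hg hk.le)).ne'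
  obtain ⟨df, hdf⟩ := List.eq_cons_of_mem_of_forall_le (l := lf.filter (i ≤ ·)) (i := i)
    (hlf.pairwise.filter _) (List.mem_filter.2 ⟨hlf.mem_iff.2 hi, by simp⟩) (by simp)
  have hcode : traceCode g (lf.filter (· < i)) = traceCode f (lf.filter (· < i)) :=
    List.flatMap_congr fun j hj => by rw [heq j (by simpa using (List.mem_filter.1 hj).2)]
  have hsplit_f : lf = lf.filter (· < i) ++ i :: df := by
    rw [← hdf, List.filter_lt_append_filter_le hlf.pairwise]
  have hsplit_g : lg = lf.filter (· < i) ++ lg.filter (i ≤ ·) := by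
    rw [← hc, List.filter_lt_append_filter_le hlg.pairwise]
  rw [hsplit_f, hsplit_g, traceCode_append, traceCode_append, hcode]
  exact (seqLT'_traceCode_cons (fun b hb => of_decide_eq_true (List.mem_filter.1 hb).2)
    hlt df).append_left _

theorem seqLT'_tail_traceCode (hg : Antitone g) (heq : ∀ j < i, f j = g j) (hlt : f i < g i)
    (hlf : IsFirstOccurrenceList f lf) (hlg : IsFirstOccurrenceList g lg) :
    SeqLT' (Sum.Lex (· < ·) (· < ·)) (traceCode f lf).tail (traceCode g lg).tail := by
  have hcmp := seqLT'_traceCode hg heq hlt hlf hlg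
  obtain ⟨j₀, lf', rfl, hj₀⟩ := hlf.exists_eq_cons_isBot i
  obtain ⟨j₁, lg', rfl, hj₁⟩ := hlg.exists_eq_cons_isBot i
  obtain rfl : j₀ = j₁ := le_antisymm (hj₀ j₁) (hj₁ j₀)
  exact hcmp.of_cons (a := Sum.inr j₀) (by simp)

end Comparison

end FirstOccurrences

theorem sigmaWellOrdered_of_traces_general
    (ι : Type) [LinearOrder ι]
    (L M : Type*) [LinearOrder L] [LinearOrder M]
    (g : L → ι → M)
    (hdec : ∀ x : L, ∀ i j : ι, i ≤ j → g x j ≤ g x i)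
    (hmono : ∀ x y : L, x < y → FunLexLT (g x) (g y))
    (σ : L → List (M ⊕ ι))
    (hσ : ∀ x : L, ∃ (n : ℕ) (z : Fin (n + 1) → M) (ξ : Fin (n + 1) → ι),
      StrictAnti z ∧ Set.range (g x) = Set.range z ∧
      (∀ i, g x (ξ i) = z i ∧ ∀ j : ι, j < ξ i → g x j ≠ z i) ∧
      σ x = Sum.inl (z 0) ::
        (List.finRange n).flatMap (fun i => [Sum.inr (ξ i.succ), Sum.inl (z i.succ)]))
    (hU : ∀ n : ℕ, SigmaWellOrderedRel
      (SeqLT' (Sum.Lex (· < ·) (· < ·)))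
      {l : List (M ⊕ ι) | ∃ x : L, l = (σ x).take (2 * n + 1)}) :
    IsSigmaWellOrdered L := by
  choose n z ξ hz hrange hξ hσ using hσ
  have hanti : ∀ x, Antitone (g x) := fun x a b hab => hdec x a b hab
  have htrace : ∀ x, σ x = (traceCode (g x) (List.ofFn (ξ x))).tail := fun x => by
    rw [hσ x, tail_traceCode_ofFn fun k => (hξ x k).1]
  refine isSigmaWellOrdered_of_map (SigmaWellOrderedRel.iUnion hU) σ (fun x y hxy => ?_)
    fun x => mem_iUnion.2 ⟨(σ x).length, x, (List.take_of_length_le (by omega)).symm⟩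
  obtain ⟨i, heq, hlt⟩ := hmono x y hxy
  rw [htrace x, htrace y]
  exact seqLT'_tail_traceCode (hanti y) heq hlt
    (.ofFn (hanti x) (hz x) (hrange x) (hξ x)) (.ofFn (hanti y) (hz y) (hrange y) (hξ y))

/-- The combinatorial core of Lemma 2.8: suppose `κ` is an infinite cardinal,
realized as a well-ordered index type `ι` of order type `κ`, and to each `x ∈ L`
is attached a decreasing function `g x : ι → M` with finite range such that
`x ↦ g x` is order-preserving for the lexicographic order on functions.  Let
`σ x` be the trace sequence of `x`: the alternating finite sequence
`⟨z₀, ξ₁, z₁, …, ξₙ, zₙ⟩` of the distinct values of `g x` (in their decreasing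
order) and of the least indices where each value appears.  If for every `n` the
set of truncated traces of length at most `2n+1` is σ-well-ordered under the
order `σ < τ iff τ is a proper initial segment of σ or σ <_lex τ`, then `L`
is σ-well-ordered. -/
theorem sigmaWellOrdered_of_traces
    (κ : Cardinal.{0}) (hκ : Cardinal.aleph0 ≤ κ)
    (ι : Type) [LinearOrder ι] [WellFoundedLT ι]
    (hι : Ordinal.type ((· < ·) : ι → ι → Prop) = κ.ord)
    (L M : Type*) [LinearOrder L] [LinearOrder M]
    (g : L → ι → M)
    (hdec : ∀ x : L, ∀ i j : ι, i ≤ j → g x j ≤ g x i)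
    (hfin : ∀ x : L, (Set.range (g x)).Finite)
    (hmono : ∀ x y : L, x < y → FunLexLT (g x) (g y))
    (σ : L → List (M ⊕ ι))
    (hσ : ∀ x : L, ∃ (n : ℕ) (z : Fin (n + 1) → M) (ξ : Fin (n + 1) → ι),
      StrictAnti z ∧ Set.range (g x) = Set.range z ∧
      (∀ i, g x (ξ i) = z i ∧ ∀ j : ι, j < ξ i → g x j ≠ z i) ∧
      σ x = Sum.inl (z 0) ::
        (List.finRange n).flatMap (fun i => [Sum.inr (ξ i.succ), Sum.inl (z i.succ)]))
    (hU : ∀ n : ℕ, SigmaWellOrderedRel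
      (SeqLT' (Sum.Lex (· < ·) (· < ·)))
      {l : List (M ⊕ ι) | ∃ x : L, l = (σ x).take (2 * n + 1)}) :
    IsSigmaWellOrdered L :=
  sigmaWellOrdered_of_traces_general ι L M g hdec hmono σ hσ hU
end
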